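/- arXiv:2109.05826 — 5 statements merged into one kernel-verified Lean document; each statement's English description precedes it below -/
import Mathlib

section
/- Let Z_c, Z_d be finite sets and let p be a joint probability density on X × Z_c × Z_d (X finite) such that the marginals of z_c and z_d under p are independent, i.e., p(z_c|z_d) = p(z_c) for all z_c, z_d with p(z_d)>0. For any fixed x with p(x)>0 and any conditional distribution Q(·|x) on Z_c with full support, D(Q(·|x) || P(·|x)) ≤ D(Q(·|x) || P(z_c)) − E_{z_c∼Q(·|x), z_d∼P(z_d)}[log p(x|z_c,z_d)] + log p(x), where P(·|x) is the posterior of z_c given x. -/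
open Finset

/-- Theorem 1 (evidence upper bound): with z_c ⟂ z_d,
D(Q(·|x)||P(·|x)) ≤ D(Q(·|x)||P(z_c)) − E_{z_c∼Q(·|x), z_d∼P(z_d)}[log p(x|z_c,z_d)] + log p(x). -/
theorem evidence_upper_bound
    {X Zc Zd : Type*} [Fintype X] [Fintype Zc] [Fintype Zd]
    (p : X → Zc → Zd → ℝ)
    (hp_pos : ∀ x zc zd, 0 < p x zc zd)
    (hp_sum : ∑ x, ∑ zc, ∑ zd, p x zc zd = 1)
    -- marginals
    (pc : Zc → ℝ) (hpc : ∀ zc, pc zc = ∑ x, ∑ zd, p x zc zd)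
    (pd : Zd → ℝ) (hpd : ∀ zd, pd zd = ∑ x, ∑ zc, p x zc zd)
    (pcd : Zc → Zd → ℝ) (hpcd : ∀ zc zd, pcd zc zd = ∑ x, p x zc zd)
    -- independence of z_c and z_d : p(z_c|z_d) = p(z_c)
    (hindep : ∀ zc zd, pcd zc zd = pc zc * pd zd)
    -- a fixed x with p(x) > 0
    (x : X) (px : ℝ) (hpx : px = ∑ zc, ∑ zd, p x zc zd)
    -- variational conditional Q(·|x) with full support
    (q : Zc → ℝ) (hq_pos : ∀ zc, 0 < q zc) (hq_sum : ∑ zc, q zc = 1)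
    -- posterior of z_c given x, and conditional p(x|z_c,z_d)
    (post : Zc → ℝ) (hpost : ∀ zc, post zc = (∑ zd, p x zc zd) / px)
    (pxcd : Zc → Zd → ℝ) (hpxcd : ∀ zc zd, pxcd zc zd = p x zc zd / pcd zc zd) :
    ∑ zc, q zc * Real.log (q zc / post zc)
      ≤ (∑ zc, q zc * Real.log (q zc / pc zc))
        - (∑ zc, ∑ zd, q zc * pd zd * Real.log (pxcd zc zd))
        + Real.log px := by
  -- nonempty types
  have hZc : Nonempty Zc := by
    by_contra h
    rw [not_nonempty_iff] at h
    simp [Finset.univ_eq_empty] at hq_sum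
  have hZd : Nonempty Zd := by
    by_contra h
    rw [not_nonempty_iff] at h
    simp [Finset.univ_eq_empty] at hp_sum
  -- positivity facts
  have hX : Nonempty X := ⟨x⟩
  have hS_pos : ∀ zc, 0 < ∑ zd, p x zc zd := fun zc =>
    Finset.sum_pos (fun zd _ => hp_pos x zc zd) Finset.univ_nonempty
  have hpc_pos : ∀ zc, 0 < pc zc := fun zc => by
    rw [hpc]
    exact Finset.sum_pos (fun x' _ => Finset.sum_pos (fun zd _ => hp_pos x' zc zd)
      Finset.univ_nonempty) Finset.univ_nonempty
  have hpd_pos : ∀ zd, 0 < pd zd := fun zd => by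
    rw [hpd]
    exact Finset.sum_pos (fun x' _ => Finset.sum_pos (fun zc _ => hp_pos x' zc zd)
      Finset.univ_nonempty) Finset.univ_nonempty
  have hpx_pos : 0 < px := by
    rw [hpx]
    exact Finset.sum_pos (fun zc _ => hS_pos zc) Finset.univ_nonempty
  -- pd sums to 1
  have hpd_sum : ∑ zd, pd zd = 1 := by
    simp_rw [hpd]
    rw [Finset.sum_comm]
    rw [← hp_sum]
    exact Finset.sum_congr rfl fun x' _ => Finset.sum_comm
  -- Jensen: ∑ pd zd * log (pxcd zc zd) ≤ log (S zc) - log (pc zc)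
  have jensen : ∀ zc, ∑ zd, pd zd * Real.log (pxcd zc zd)
      ≤ Real.log (∑ zd, p x zc zd) - Real.log (pc zc) := by
    intro zc
    have hmem : ∀ zd ∈ Finset.univ, pxcd zc zd ∈ Set.Ioi (0:ℝ) := by
      intro zd _
      rw [hpxcd, hindep]
      exact div_pos (hp_pos x zc zd) (mul_pos (hpc_pos zc) (hpd_pos zd))
    have h := (strictConcaveOn_log_Ioi.concaveOn).le_map_sum
      (fun zd (_ : zd ∈ Finset.univ) => (hpd_pos zd).le) hpd_sum hmem
    have hsum : ∑ zd, pd zd • pxcd zc zd = (∑ zd, p x zc zd) / pc zc := by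
      rw [Finset.sum_div]
      refine Finset.sum_congr rfl fun zd _ => ?_
      rw [smul_eq_mul, hpxcd, hindep]
      field_simp
      rw [mul_div_mul_left _ _ (hpd_pos zd).ne']
    rw [hsum] at h
    calc ∑ zd, pd zd * Real.log (pxcd zc zd)
        = ∑ zd, pd zd • Real.log (pxcd zc zd) := by simp [smul_eq_mul]
      _ ≤ Real.log ((∑ zd, p x zc zd) / pc zc) := h
      _ = Real.log (∑ zd, p x zc zd) - Real.log (pc zc) :=
          Real.log_div (hS_pos zc).ne' (hpc_pos zc).ne'
  -- rewrite the goal using log identities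
  have hLHS : ∑ zc, q zc * Real.log (q zc / post zc)
      = ∑ zc, q zc * (Real.log (q zc) - Real.log (∑ zd, p x zc zd)) + Real.log px := by
    have : ∀ zc, q zc * Real.log (q zc / post zc)
        = q zc * (Real.log (q zc) - Real.log (∑ zd, p x zc zd)) + q zc * Real.log px := by
      intro zc
      rw [hpost, Real.log_div (hq_pos zc).ne' (div_pos (hS_pos zc) hpx_pos).ne',
        Real.log_div (hS_pos zc).ne' hpx_pos.ne']
      ring
    rw [Finset.sum_congr rfl fun zc _ => this zc, Finset.sum_add_distrib,
      ← Finset.sum_mul, hq_sum, one_mul]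
  rw [hLHS]
  have key : ∑ zc, q zc * (Real.log (q zc) - Real.log (∑ zd, p x zc zd))
      ≤ (∑ zc, q zc * Real.log (q zc / pc zc))
        - (∑ zc, ∑ zd, q zc * pd zd * Real.log (pxcd zc zd)) := by
    rw [← Finset.sum_sub_distrib]
    refine Finset.sum_le_sum fun zc _ => ?_
    have h1 : ∑ zd, q zc * pd zd * Real.log (pxcd zc zd)
        = q zc * ∑ zd, pd zd * Real.log (pxcd zc zd) := by
      rw [Finset.mul_sum]; exact Finset.sum_congr rfl fun zd _ => by ring
    rw [h1, Real.log_div (hq_pos zc).ne' (hpc_pos zc).ne']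
    have := mul_le_mul_of_nonneg_left (jensen zc) (hq_pos zc).le
    nlinarith [this]
  linarith [key]
end

section
/- Let P and Q be probability distributions on a finite set Z with strictly positive densities p, q. Then the reverse KL divergence D(P||Q) = Σ_z p(z) log(p(z)/q(z)) satisfies the variational (dual) representation D(P||Q) = sup over functions T: Z → (−∞,0) of [ Σ_z p(z) T(z) − Σ_z q(z) f*(T(z)) ], where f*(t) = −1 − log(−t), and the supremum is attained at T(z) = −q(z)/p(z). -/
lemma fgan_pointwise {p q t : ℝ} (hp : 0 < p) (hq : 0 < q) (ht : t < 0) :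
    p * t - q * (-1 - Real.log (-t)) ≤ q * Real.log (q / p) := by
  have hnt : 0 < -t := neg_pos.mpr ht
  have hx : 0 < (-t) * p / q := div_pos (mul_pos hnt hp) hq
  have hlog := Real.log_le_sub_one_of_pos hx
  have h1 : Real.log ((-t) * p / q) = Real.log (-t) - Real.log (q / p) := by
    rw [Real.log_div (by positivity) hq.ne', Real.log_mul (by linarith) hp.ne',
      Real.log_div hq.ne' hp.ne']
    ring
  rw [h1] at hlog
  have h3 : q * (Real.log (-t) - Real.log (q / p)) ≤ q * ((-t) * p / q - 1) :=
    mul_le_mul_of_nonneg_left hlog hq.le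
  have h4 : q * ((-t) * p / q - 1) = -t * p - q := by field_simp
  nlinarith [h3, h4]

lemma fgan_eq {p q : ℝ} (hp : 0 < p) (hq : 0 < q) :
    p * (-(q / p)) - q * (-1 - Real.log (-(-(q / p)))) = q * Real.log (q / p) := by
  rw [neg_neg]
  field_simp
  ring

/-- f-GAN variational (dual) representation for f(u) = −log u:
D(Q||P) = sup_{T : Z → (−∞,0)} [Σ p T − Σ q f*(T)], with f*(t) = −1 − log(−t),
and the supremum is attained at T(z) = −q(z)/p(z). -/
theorem fgan_dual_representation
    {Z : Type*} [Fintype Z]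
    (p q : Z → ℝ)
    (hp_pos : ∀ z, 0 < p z) (hq_pos : ∀ z, 0 < q z)
    (hp_sum : ∑ z, p z = 1) (hq_sum : ∑ z, q z = 1) :
    IsGreatest
      {v : ℝ | ∃ T : Z → ℝ, (∀ z, T z < 0) ∧
        v = (∑ z, p z * T z) - ∑ z, q z * (-1 - Real.log (-(T z)))}
      (∑ z, q z * Real.log (q z / p z))
    ∧ ((∑ z, p z * (fun z => -(q z / p z)) z)
        - ∑ z, q z * (-1 - Real.log (-((fun z => -(q z / p z)) z)))
        = ∑ z, q z * Real.log (q z / p z)) := by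
  have hatt : (∑ z, p z * (fun z => -(q z / p z)) z)
        - ∑ z, q z * (-1 - Real.log (-((fun z => -(q z / p z)) z)))
        = ∑ z, q z * Real.log (q z / p z) := by
    rw [← Finset.sum_sub_distrib]
    exact Finset.sum_congr rfl fun z _ => fgan_eq (hp_pos z) (hq_pos z)
  refine ⟨⟨⟨fun z => -(q z / p z), fun z => neg_lt_zero.mpr (div_pos (hq_pos z) (hp_pos z)), hatt.symm⟩, ?_⟩, hatt⟩
  rintro v ⟨T, hT, rfl⟩
  rw [← Finset.sum_sub_distrib]
  exact Finset.sum_le_sum fun z _ => fgan_pointwise (hp_pos z) (hq_pos z) (hT z)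
end

section
/- For any probability densities p, q on a finite set Z with q strictly positive, and any function T: Z → (−∞, 0), we have Σ_z p(z) T(z) − Σ_z q(z)(−1 − log(−T(z))) ≤ Σ_z q(z) log(q(z)/p(z)), with equality when T(z) = −q(z)/p(z) (requiring p strictly positive). -/
lemma fy_pointwise (pz qz t : ℝ) (hp : 0 < pz) (hq : 0 < qz) (ht : t < 0) :
    pz * t - qz * (-1 - Real.log (-t)) ≤ qz * Real.log (qz / pz) := by
  have hnt : 0 < -t := by linarith
  have hs : 0 < pz / qz * (-t) := by positivity
  have h := Real.log_le_sub_one_of_pos hs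
  rw [Real.log_mul (by positivity) (by positivity),
    Real.log_div (by positivity) (by positivity)] at h
  rw [Real.log_div (by positivity) (by positivity)]
  have hq' : qz ≠ 0 := ne_of_gt hq
  have := mul_le_mul_of_nonneg_left h (le_of_lt hq)
  field_simp at this
  rw [show Real.log (-t) = Real.log t from Real.log_neg_eq_log t] at this ⊢
  nlinarith [this]

/-- Fenchel–Young bound: for any T : Z → (−∞,0),
Σ p T − Σ q(−1 − log(−T)) ≤ D(Q||P), with equality at T(z) = −q(z)/p(z). -/
theorem fenchel_young_kl_bound
    {Z : Type*} [Fintype Z]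
    (p q : Z → ℝ)
    (hp_pos : ∀ z, 0 < p z) (hq_pos : ∀ z, 0 < q z)
    (hp_sum : ∑ z, p z = 1) (hq_sum : ∑ z, q z = 1) :
    (∀ T : Z → ℝ, (∀ z, T z < 0) →
      (∑ z, p z * T z) - (∑ z, q z * (-1 - Real.log (-(T z))))
        ≤ ∑ z, q z * Real.log (q z / p z))
    ∧ (∀ T : Z → ℝ, (∀ z, T z = -(q z / p z)) →
      (∑ z, p z * T z) - (∑ z, q z * (-1 - Real.log (-(T z))))
        = ∑ z, q z * Real.log (q z / p z)) := by
  constructor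
  · intro T hT
    rw [← Finset.sum_sub_distrib]
    exact Finset.sum_le_sum fun z _ => fy_pointwise _ _ _ (hp_pos z) (hq_pos z) (hT z)
  · intro T hT
    rw [← Finset.sum_sub_distrib]
    apply Finset.sum_congr rfl
    intro z _
    rw [hT z, neg_neg]
    have hp := hp_pos z; have hq := hq_pos z
    have : p z * -(q z / p z) = -q z := by field_simp
    rw [this]
    ring
end

section
/- Let Q₁, Q₂ be probability densities on a finite set Z with full support and let P be a density with full support. If q₁(z) ≤ β·q₂(z) for all z ∈ Z with β ≥ 1, then Σ_z q₁(z) log(q₁(z)/p(z)) ≤ β·Σ_z q₂(z)·max(log(q₂(z)β/p(z)), 0) + β·log β. In particular, pointwise domination of densities yields a quantitative bound on the KL divergence of the dominated distribution in terms of the dominating one. -/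
/-- Quantitative KL bound under pointwise domination q₁ ≤ β·q₂ with β ≥ 1:
Σ q₁ log(q₁/p) ≤ β·Σ q₂·max(log(q₂β/p), 0) + β·log β. -/
theorem kl_pointwise_domination_bound
    {Z : Type*} [Fintype Z]
    (q₁ q₂ p : Z → ℝ) (β : ℝ)
    (hq₁_pos : ∀ z, 0 < q₁ z) (hq₁_sum : ∑ z, q₁ z = 1)
    (hq₂_pos : ∀ z, 0 < q₂ z) (hq₂_sum : ∑ z, q₂ z = 1)
    (hp_pos : ∀ z, 0 < p z) (hp_sum : ∑ z, p z = 1)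
    (hβ : 1 ≤ β)
    (hdom : ∀ z, q₁ z ≤ β * q₂ z) :
    ∑ z, q₁ z * Real.log (q₁ z / p z)
      ≤ β * (∑ z, q₂ z * max (Real.log (q₂ z * β / p z)) 0) + β * Real.log β := by
  have hβ0 : 0 < β := lt_of_lt_of_le one_pos hβ
  have hlogβ : 0 ≤ Real.log β := Real.log_nonneg hβ
  have key : ∀ z, q₁ z * Real.log (q₁ z / p z) ≤
      β * (q₂ z * max (Real.log (q₂ z * β / p z)) 0) + β * Real.log β * q₂ z := by
    intro z
    have hq1 := hq₁_pos z
    have hq2 := hq₂_pos z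
    have hp := hp_pos z
    have hrhs : 0 ≤ β * (q₂ z * max (Real.log (q₂ z * β / p z)) 0) + β * Real.log β * q₂ z := by
      have : 0 ≤ max (Real.log (q₂ z * β / p z)) 0 := le_max_right _ _
      positivity
    rcases le_or_gt (q₁ z) (p z) with h | h
    · have hle : q₁ z * Real.log (q₁ z / p z) ≤ 0 :=
        mul_nonpos_of_nonneg_of_nonpos hq1.le
          (Real.log_nonpos (by positivity) (div_le_one_of_le₀ h hp.le))
      linarith
    · have hlog1 : 0 ≤ Real.log (q₁ z / p z) :=
        Real.log_nonneg ((one_le_div hp).mpr h.le)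
      have h1 : q₁ z * Real.log (q₁ z / p z) ≤ (β * q₂ z) * Real.log (β * q₂ z / p z) := by
        apply mul_le_mul (hdom z) _ hlog1 (by positivity)
        apply Real.log_le_log (by positivity)
        gcongr
        exact hdom z
      have h2 : Real.log (β * q₂ z / p z) = Real.log (q₂ z * β / p z) := by ring_nf
      have h3 : Real.log (q₂ z * β / p z) ≤ max (Real.log (q₂ z * β / p z)) 0 :=
        le_max_left _ _
      have h4 : (β * q₂ z) * Real.log (β * q₂ z / p z)
          ≤ β * (q₂ z * max (Real.log (q₂ z * β / p z)) 0) := by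
        rw [h2, mul_assoc]
        gcongr
      nlinarith [mul_nonneg (mul_nonneg hβ0.le hlogβ) hq2.le]
  calc ∑ z, q₁ z * Real.log (q₁ z / p z)
      ≤ ∑ z, (β * (q₂ z * max (Real.log (q₂ z * β / p z)) 0) + β * Real.log β * q₂ z) :=
        Finset.sum_le_sum fun z _ => key z
    _ = β * (∑ z, q₂ z * max (Real.log (q₂ z * β / p z)) 0)
          + β * Real.log β * (∑ z, q₂ z) := by
        rw [Finset.sum_add_distrib, ← Finset.mul_sum, ← Finset.mul_sum]
    _ = β * (∑ z, q₂ z * max (Real.log (q₂ z * β / p z)) 0) + β * Real.log β := by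
        rw [hq₂_sum, mul_one]
end

section
/- Nonnegativity and faithfulness of the divergence appearing in the variational bound: for probability densities q, p on finite Z with full support, the quantity sup_{T: Z→(−∞,0)} [Σ_z p(z)T(z) + Σ_z q(z)(1 + log(−T(z)))] equals D(Q||P), is nonnegative, and is zero if and only if p = q. -/
private lemma ptwise (p q t : ℝ) (hp : 0 < p) (hq : 0 < q) (ht : t < 0) :
    p * t + q * (1 + Real.log (-t)) ≤ q * Real.log (q / p) := by
  have h1 : Real.log (-t * (p / q)) ≤ -t * (p / q) - 1 :=
    Real.log_le_sub_one_of_pos (mul_pos (neg_pos.mpr ht) (div_pos hp hq))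
  have h2 : Real.log (-t * (p / q)) = Real.log (-t) + Real.log (p / q) :=
    Real.log_mul (by linarith) (by positivity)
  have h3 : Real.log (p / q) = -Real.log (q / p) := by
    rw [← Real.log_inv]; congr 1; field_simp
  have hqne : q ≠ 0 := hq.ne'
  have h4 : q * (-t * (p / q)) = -t * p := by field_simp
  nlinarith [mul_le_mul_of_nonneg_left h1 hq.le]

private lemma termge (p q : ℝ) (hp : 0 < p) (hq : 0 < q) :
    q - p ≤ q * Real.log (q / p) := by
  have h1 : Real.log (p / q) ≤ p / q - 1 := Real.log_le_sub_one_of_pos (by positivity)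
  have h3 : Real.log (p / q) = -Real.log (q / p) := by
    rw [← Real.log_inv]; congr 1; field_simp
  have h4 : q * (p / q) = p := by field_simp
  nlinarith [mul_le_mul_of_nonneg_left h1 hq.le]

private lemma termgt (p q : ℝ) (hp : 0 < p) (hq : 0 < q) (hne : p ≠ q) :
    q - p < q * Real.log (q / p) := by
  have h1 : Real.log (p / q) < p / q - 1 :=
    Real.log_lt_sub_one_of_pos (by positivity) (by
      intro h; apply hne; field_simp at h; linarith)
  have h3 : Real.log (p / q) = -Real.log (q / p) := by
    rw [← Real.log_inv]; congr 1; field_simp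
  have h4 : q * (p / q) = p := by field_simp
  nlinarith [mul_lt_mul_of_pos_left h1 hq]

/-- The variational quantity sup_T [Σ p T + Σ q (1 + log(−T))] equals the KL
divergence D(Q||P), is nonnegative, and vanishes iff p = q. -/
theorem variational_kl_nonneg_faithful
    {Z : Type*} [Fintype Z]
    (p q : Z → ℝ)
    (hp_pos : ∀ z, 0 < p z) (hq_pos : ∀ z, 0 < q z)
    (hp_sum : ∑ z, p z = 1) (hq_sum : ∑ z, q z = 1) :
    IsGreatest
      {v : ℝ | ∃ T : Z → ℝ, (∀ z, T z < 0) ∧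
        v = (∑ z, p z * T z) + ∑ z, q z * (1 + Real.log (-(T z)))}
      (∑ z, q z * Real.log (q z / p z))
    ∧ 0 ≤ ∑ z, q z * Real.log (q z / p z)
    ∧ ((∑ z, q z * Real.log (q z / p z)) = 0 ↔ p = q) := by
  have hge : ∀ z ∈ Finset.univ, q z - p z ≤ q z * Real.log (q z / p z) :=
    fun z _ => termge _ _ (hp_pos z) (hq_pos z)
  have hsumge : (0:ℝ) ≤ ∑ z, q z * Real.log (q z / p z) := by
    have := Finset.sum_le_sum hge
    rw [Finset.sum_sub_distrib, hp_sum, hq_sum] at this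
    linarith
  have hiff : (∑ z, q z * Real.log (q z / p z)) = 0 ↔ p = q := by
    constructor
    · intro h0
      by_contra hne
      obtain ⟨z0, hz0⟩ : ∃ z0, p z0 ≠ q z0 := by
        by_contra h; push_neg at h; exact hne (funext h)
      have hlt : (0:ℝ) < ∑ z, q z * Real.log (q z / p z) := by
        have := Finset.sum_lt_sum hge ⟨z0, Finset.mem_univ z0,
          termgt _ _ (hp_pos z0) (hq_pos z0) hz0⟩
        rw [Finset.sum_sub_distrib, hp_sum, hq_sum] at this
        linarith
      linarith
    · intro h
      subst h
      have hlog : ∀ z, Real.log (p z / p z) = 0 := fun z => by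
        rw [div_self (hp_pos z).ne', Real.log_one]
      simp [hlog]
  have hmem : (∑ z, q z * Real.log (q z / p z)) ∈
      {v : ℝ | ∃ T : Z → ℝ, (∀ z, T z < 0) ∧
        v = (∑ z, p z * T z) + ∑ z, q z * (1 + Real.log (-(T z)))} := by
    refine ⟨fun z => -(q z / p z), fun z => by
      have := div_pos (hq_pos z) (hp_pos z); linarith, ?_⟩
    have h1 : (∑ z, p z * -(q z / p z)) = -1 := by
      rw [← hq_sum, ← Finset.sum_neg_distrib]
      exact Finset.sum_congr rfl fun z _ => by
        have := (hp_pos z).ne'; field_simp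
    have h2 : (∑ z, q z * (1 + Real.log (-(-(q z / p z))))) =
        1 + ∑ z, q z * Real.log (q z / p z) := by
      simp only [neg_neg, mul_add, mul_one, Finset.sum_add_distrib, hq_sum]
    rw [h1, h2]; ring
  have hub : ∀ v ∈ {v : ℝ | ∃ T : Z → ℝ, (∀ z, T z < 0) ∧
        v = (∑ z, p z * T z) + ∑ z, q z * (1 + Real.log (-(T z)))},
      v ≤ ∑ z, q z * Real.log (q z / p z) := by
    rintro v ⟨T, hT, rfl⟩
    rw [← Finset.sum_add_distrib]
    exact Finset.sum_le_sum fun z _ => ptwise _ _ _ (hp_pos z) (hq_pos z) (hT z)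
  exact ⟨⟨hmem, hub⟩, hsumge, hiff⟩
end
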